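/- For f(s,t) = (ψ(s,t), (s-t)/√2, (s+t)/√2, ψ(s,t)) with ψ smooth, the mean curvature vector H = -f_{st} (computed with respect to the induced metric -(ds⊗dt+dt⊗ds)) equals (-ψ_{st}, 0, 0, -ψ_{st}); in particular H is light-like (⟨H,H⟩ = 0) whenever ψ_{st} ≠ 0, so f is quasi-minimal at points where ψ_{st} ≠ 0. -/

import Mathlib

def neutralForm (x y : Fin 4 → ℝ) : ℝ :=
  -(x 0 * y 0) - x 1 * y 1 + x 2 * y 2 + x 3 * y 3

noncomputable def chenSurf (ψ : ℝ → ℝ → ℝ) (s t : ℝ) : Fin 4 → ℝ :=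
  ![ψ s t, (s - t) / Real.sqrt 2, (s + t) / Real.sqrt 2, ψ s t]

/-- For `f(s,t) = (ψ(s,t), (s-t)/√2, (s+t)/√2, ψ(s,t))` with `ψ` smooth,
the mean curvature vector `H = -f_{st}` equals `(-ψ_{st}, 0, 0, -ψ_{st})`; in particular
`⟨H,H⟩ = 0`, so `H` is light-like (hence `f` quasi-minimal) wherever `ψ_{st} ≠ 0`. -/
theorem chenSurf_mean_curvature
    (U : Set (ℝ × ℝ)) (hU : IsOpen U) (ψ : ℝ → ℝ → ℝ)
    (hψ : ContDiffOn ℝ (⊤ : ℕ∞) (fun p : ℝ × ℝ => ψ p.1 p.2) U) :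
    ∀ p ∈ U,
      (-(deriv (fun y => deriv (fun x => chenSurf ψ x y) p.1) p.2) =
        ![-(deriv (fun y => deriv (fun x => ψ x y) p.1) p.2), 0, 0,
          -(deriv (fun y => deriv (fun x => ψ x y) p.1) p.2)]) ∧
      neutralForm (-(deriv (fun y => deriv (fun x => chenSurf ψ x y) p.1) p.2))
        (-(deriv (fun y => deriv (fun x => chenSurf ψ x y) p.1) p.2)) = 0 ∧
      (deriv (fun y => deriv (fun x => ψ x y) p.1) p.2 ≠ 0 →
        -(deriv (fun y => deriv (fun x => chenSurf ψ x y) p.1) p.2) ≠ 0) := by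
  intro p hp
  set Ψ : ℝ × ℝ → ℝ := fun q => ψ q.1 q.2 with hΨdef
  set G : ℝ × ℝ → ℝ := fun q => fderiv ℝ Ψ q (1, 0) with hGdef
  have hΨat : ContDiffAt ℝ (⊤ : ℕ∞) Ψ p := hψ.contDiffAt (hU.mem_nhds hp)
  have hGat : ContDiffAt ℝ (⊤ : ℕ∞) G p := by
    have h1 : ContDiffAt ℝ (⊤ : ℕ∞) (fderiv ℝ Ψ) p := by
      have := hΨat.fderiv_right (m := (⊤ : ℕ∞)) (le_refl _)
      exact this
    exact h1.clm_apply contDiffAt_const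
  -- for any q ∈ U, the partial derivative in x
  have key : ∀ q : ℝ × ℝ, q ∈ U →
      HasDerivAt (fun x => ψ x q.2) (G q) q.1 := by
    intro q hq
    have hdiff : DifferentiableAt ℝ Ψ q :=
      (hψ.contDiffAt (hU.mem_nhds hq)).differentiableAt (by simp)
    have h1 : HasDerivAt (fun x : ℝ => (x, q.2)) ((1 : ℝ), (0 : ℝ)) q.1 :=
      HasDerivAt.prodMk (hasDerivAt_id q.1) (hasDerivAt_const _ q.2)
    have := hdiff.hasFDerivAt.comp_hasDerivAt q.1 h1
    exact this
  -- neighborhood of p.2 staying in U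
  have hnhds : ∀ᶠ y in nhds p.2, (p.1, y) ∈ U := by
    have hc : Continuous (fun y : ℝ => (p.1, y)) := continuous_const.prodMk continuous_id
    have : (fun y : ℝ => (p.1, y)) ⁻¹' U ∈ nhds p.2 :=
      hc.continuousAt.preimage_mem_nhds (hU.mem_nhds (by simpa using hp))
    exact this
  set c : ℝ := 1 / Real.sqrt 2 with hc
  set b : ℝ → ℝ := fun y => G (p.1, y) with hb
  -- a =ᶠ b near p.2
  have heqa : (fun y => deriv (fun x => ψ x y) p.1) =ᶠ[nhds p.2] b := by
    filter_upwards [hnhds] with y hy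
    exact (key (p.1, y) hy).deriv
  have hbdiff : DifferentiableAt ℝ b p.2 := by
    have : ContDiffAt ℝ (⊤ : ℕ∞) b p.2 := by
      have hcomp : ContDiffAt ℝ (⊤ : ℕ∞) (fun y : ℝ => (p.1, y)) p.2 :=
        ContDiffAt.prodMk contDiffAt_const contDiffAt_id
      have := hGat.comp p.2 (by simpa using hcomp)
      exact this
    exact this.differentiableAt (by simp)
  have hD : deriv (fun y => deriv (fun x => ψ x y) p.1) p.2 = deriv b p.2 := heqa.deriv_eq
  -- eventual form of F
  have hFeq : (fun y => deriv (fun x => chenSurf ψ x y) p.1) =ᶠ[nhds p.2]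
      (fun y => ![b y, c, c, b y]) := by
    filter_upwards [hnhds] with y hy
    have hder : HasDerivAt (fun x => chenSurf ψ x y) ![b y, c, c, b y] p.1 := by
      rw [hasDerivAt_pi]
      intro i
      fin_cases i
      · simpa [chenSurf] using key (p.1, y) hy
      · have : HasDerivAt (fun x : ℝ => (x - y) / Real.sqrt 2) c p.1 := by
          simpa [hc] using ((hasDerivAt_id p.1).sub_const y).div_const (Real.sqrt 2)
        simpa [chenSurf] using this
      · have : HasDerivAt (fun x : ℝ => (x + y) / Real.sqrt 2) c p.1 := by
          simpa [hc] using ((hasDerivAt_id p.1).add_const y).div_const (Real.sqrt 2)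
        simpa [chenSurf] using this
      · simpa [chenSurf] using key (p.1, y) hy
    exact hder.deriv
  have hmain : deriv (fun y => deriv (fun x => chenSurf ψ x y) p.1) p.2 =
      ![deriv b p.2, 0, 0, deriv b p.2] := by
    rw [hFeq.deriv_eq]
    have hder : HasDerivAt (fun y => ![b y, c, c, b y] : ℝ → Fin 4 → ℝ)
        ![deriv b p.2, 0, 0, deriv b p.2] p.2 := by
      rw [hasDerivAt_pi]
      intro i
      fin_cases i
      · simpa using hbdiff.hasDerivAt
      · simpa using hasDerivAt_const p.2 c
      · simpa using hasDerivAt_const p.2 c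
      · simpa using hbdiff.hasDerivAt
    exact hder.deriv
  rw [hD, hmain]
  refine ⟨?_, ?_, ?_⟩
  · funext i; fin_cases i <;> simp
  · simp [neutralForm]
  · intro hne h
    have := congrFun h 0
    simp at this
    exact hne this
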